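/- Let f be a homogeneous polynomial in ℚ_p[u,v] such that f(kt, lt) ∈ ℤ_p[t] for all k, l ∈ 1 + pℤ_p. Then f is a ℤ_p[u]-linear combination of the polynomials c_k(u,v) = ∏_{i=0}^{k-1} (v − q̂^i u)/(q̂^k − q̂^i). -/

import Mathlib

open MvPolynomial

/-- `c_k(u,v) = ∏_{i=0}^{k-1} (v − q̂^i u)/(q̂^k − q̂^i)` in `ℚ_p[u,v]`. -/
noncomputable def cpoly (p : ℕ) [Fact p.Prime] (q : ℤ) (k : ℕ) :
    MvPolynomial (Fin 2) ℚ_[p] :=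
  ∏ i ∈ Finset.range k,
    (C ((((q : ℚ_[p]) ^ (p - 1)) ^ k - ((q : ℚ_[p]) ^ (p - 1)) ^ i)⁻¹) *
      (X 1 - C (((q : ℚ_[p]) ^ (p - 1)) ^ i) * X 0))

/-!
At the point `(1, q̂^s)` the polynomial `c_k` takes the value of the Gaussian binomial coefficient
`[s choose k]` in `q̂`, an integer which vanishes for `s < k` and equals `1` for `s = k`. The
hypothesis on `f`, applied at `(1, q̂^s)` with `q̂^s ∈ 1 + pℤ_p`, gives `f(1, q̂^s) ∈ ℤ_p`, so the
unitriangular system `f(1, q̂^s) = ∑_k λ_k [s choose k]`, `s ≤ d`, has a solution `λ` in `ℤ_p`.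
Then `f` and `∑_k λ_k u^(d-k) c_k` are homogeneous of degree `d` and agree at the `d + 1` points
`(1, q̂^s)`, whose second coordinates are distinct because `q ≠ 0, ±1`; hence they are equal.
-/

open Finset

section GaussBinomial

variable {R S : Type*} [CommRing R] [CommRing S]

def gaussBinomial (Q : R) : ℕ → ℕ → R
  | _, 0 => 1
  | 0, _ + 1 => 0
  | n + 1, k + 1 => gaussBinomial Q n k + Q ^ (k + 1) * gaussBinomial Q n (k + 1)

variable (Q : R)

@[simp]
theorem gaussBinomial_zero_right (n : ℕ) : gaussBinomial Q n 0 = 1 := by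
  cases n <;> rfl

@[simp]
theorem gaussBinomial_zero_succ (k : ℕ) : gaussBinomial Q 0 (k + 1) = 0 := rfl

theorem gaussBinomial_succ_succ (n k : ℕ) :
    gaussBinomial Q (n + 1) (k + 1) =
      gaussBinomial Q n k + Q ^ (k + 1) * gaussBinomial Q n (k + 1) := rfl

theorem gaussBinomial_eq_zero_of_lt {n k : ℕ} (h : n < k) : gaussBinomial Q n k = 0 := by
  induction n generalizing k with
  | zero => obtain ⟨k, rfl⟩ := Nat.exists_eq_succ_of_ne_zero h.ne'; rfl
  | succ n ih =>
    obtain ⟨k, rfl⟩ := Nat.exists_eq_succ_of_ne_zero (Nat.ne_zero_of_lt h)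
    rw [gaussBinomial_succ_succ, ih (by omega), ih (by omega), mul_zero, add_zero]

@[simp]
theorem gaussBinomial_self (n : ℕ) : gaussBinomial Q n n = 1 := by
  induction n with
  | zero => rfl
  | succ n ih =>
    rw [gaussBinomial_succ_succ, ih, gaussBinomial_eq_zero_of_lt Q n.lt_succ_self, mul_zero,
      add_zero]

theorem map_gaussBinomial (φ : R →+* S) (n k : ℕ) :
    φ (gaussBinomial Q n k) = gaussBinomial (φ Q) n k := by
  induction n generalizing k with
  | zero => cases k <;> simp
  | succ n ih => cases k <;> simp [gaussBinomial_succ_succ, ih]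

@[simp, norm_cast]
theorem Int.cast_gaussBinomial (Q : ℤ) (n k : ℕ) :
    ((gaussBinomial Q n k : ℤ) : R) = gaussBinomial (Q : R) n k :=
  map_gaussBinomial Q (Int.castRingHom R) n k

theorem prod_range_succ_pow_succ_sub_pow (n k : ℕ) :
    ∏ i ∈ range (k + 1), (Q ^ (n + 1) - Q ^ i) =
      (Q ^ (n + 1) - 1) * Q ^ k * ∏ i ∈ range k, (Q ^ n - Q ^ i) := by
  have h : ∀ i ∈ range k, Q ^ (n + 1) - Q ^ (i + 1) = Q * (Q ^ n - Q ^ i) := fun _ _ => by ring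
  rw [prod_range_succ', prod_congr rfl h, prod_mul_distrib, prod_const, card_range, pow_zero]
  ring

theorem gaussBinomial_eq_prod_div {K : Type*} [Field K] {Q : K}
    (hQ : Function.Injective (Q ^ · : ℕ → K)) (n k : ℕ) :
    gaussBinomial Q n k =
      (∏ i ∈ range k, (Q ^ n - Q ^ i)) / ∏ i ∈ range k, (Q ^ k - Q ^ i) := by
  have hsub : ∀ {a b : ℕ}, a ≠ b → Q ^ a - Q ^ b ≠ 0 := fun h => sub_ne_zero.2 (hQ.ne h)
  have hQ0 : Q ≠ 0 := by
    rintro rfl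
    exact hsub (a := 1) (b := 2) (by omega) (by simp)
  have hD : ∀ k, ∏ i ∈ range k, (Q ^ k - Q ^ i) ≠ 0 := fun k =>
    prod_ne_zero_iff.2 fun i hi => hsub (mem_range.1 hi).ne'
  induction n generalizing k with
  | zero =>
    cases k with
    | zero => simp
    | succ k => simp [prod_range_succ']
  | succ n ih =>
    cases k with
    | zero => simp
    | succ k =>
      have hk : Q ^ (k + 1) - 1 ≠ 0 := by simpa using hsub (a := k + 1) (b := 0) (by omega)
      have := hD k
      rw [gaussBinomial_succ_succ, ih, ih, prod_range_succ_pow_succ_sub_pow,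
        prod_range_succ_pow_succ_sub_pow, prod_range_succ]
      field_simp
      ring

end GaussBinomial

theorem exists_sum_mul_eq_of_unitriangular {R : Type*} [CommRing R] (c : ℕ → ℕ → R)
    (hc_lt : ∀ {k s}, s < k → c k s = 0) (hc_self : ∀ s, c s s = 1) (E : ℕ → R) (n : ℕ) :
    ∃ a : ℕ → R, ∀ s < n, ∑ k ∈ range n, a k * c k s = E s := by
  induction n with
  | zero => exact ⟨0, by simp⟩
  | succ n ih =>
    obtain ⟨a, ha⟩ := ih
    refine ⟨Function.update a n (E n - ∑ k ∈ range n, a k * c k n), fun s hs => ?_⟩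
    rw [sum_range_succ, Function.update_self,
      sum_congr rfl fun k hk => by rw [Function.update_of_ne (mem_range.1 hk).ne]]
    rcases Nat.lt_succ_iff_lt_or_eq.1 hs with hs | rfl
    · rw [hc_lt hs, mul_zero, add_zero, ha s hs]
    · rw [hc_self, mul_one, add_sub_cancel]

namespace MvPolynomial

theorem IsHomogeneous.aeval_C_mul_X {R σ : Type*} [CommSemiring R] {φ : MvPolynomial σ R}
    {n : ℕ} (hφ : φ.IsHomogeneous n) (c : σ → R) :
    MvPolynomial.aeval (fun i => Polynomial.C (c i) * Polynomial.X) φ =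
      Polynomial.C (eval c φ) * Polynomial.X ^ n := by
  rw [aeval_def, eval₂_eq, eval_eq, map_sum, sum_mul]
  refine sum_congr rfl fun m hm => ?_
  have hdeg : ∑ i ∈ m.support, m i = n := by
    simpa [Finsupp.weight_apply, Finsupp.sum] using hφ (mem_support_iff.1 hm)
  simp only [mul_pow, prod_mul_distrib, prod_pow_eq_pow_sum, hdeg, map_mul, map_prod, map_pow,
    Polynomial.algebraMap_eq]
  ring

variable {K : Type*} [Field K]

theorem IsHomogeneous.natDegree_aeval_X_one_le {φ : MvPolynomial (Fin 2) K} {n : ℕ}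
    (hφ : φ.IsHomogeneous n) :
    (MvPolynomial.aeval ![(Polynomial.X : Polynomial K), 1] φ).natDegree ≤ n := by
  rw [φ.as_sum, map_sum]
  refine Polynomial.natDegree_sum_le_of_forall_le _ _ fun m hm => ?_
  have hdeg : m 0 + m 1 = n := by
    simpa [Finsupp.weight_apply, Finsupp.sum_fintype, Fin.sum_univ_two] using
      hφ (mem_support_iff.1 hm)
  rw [aeval_monomial, Finsupp.prod_fintype _ _ (by simp), Fin.prod_univ_two]
  simp only [Matrix.cons_val_zero, Matrix.cons_val_one, one_pow, mul_one,
    ← Polynomial.C_eq_algebraMap]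
  exact (Polynomial.natDegree_C_mul_X_pow_le _ _).trans (by omega)

theorem IsHomogeneous.eq_zero_of_eval_one_eq_zero {φ : MvPolynomial (Fin 2) K} {n : ℕ}
    (hφ : φ.IsHomogeneous n) (S : Finset K) (hS : n < #S) (h : ∀ y ∈ S, eval ![1, y] φ = 0) :
    φ = 0 := by
  -- `Polynomial.homogenize` inverts the dehomogenization `X 1 ↦ 1`, hence the swap.
  set ψ := rename (Equiv.swap 0 1) φ
  have hψ : ψ.IsHomogeneous n := hφ.rename_isHomogeneous
  have hP : MvPolynomial.aeval ![(Polynomial.X : Polynomial K), 1] ψ = 0 := by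
    refine Polynomial.eq_zero_of_natDegree_lt_card_of_eval_eq_zero' _ S (fun y hy => ?_)
      ((natDegree_aeval_X_one_le hψ).trans_lt hS)
    rw [← h y hy, aeval_rename, ← Polynomial.coe_aeval_eq_eval, ← AlgHom.comp_apply, comp_aeval,
      aeval_eq_eval]
    congr 2
    funext i
    fin_cases i <;> simp
  have hψ0 : ψ = 0 := by
    rw [← Polynomial.homogenize_eq_of_isHomogeneous hψ hP, Polynomial.homogenize_zero]
  exact rename_injective _ (Equiv.injective _) (hψ0.trans (map_zero _).symm)

end MvPolynomial

theorem one_lt_natAbs_of_two_lt_orderOf {n : ℕ} {q : ℤ} (h : 2 < orderOf (q : ZMod n)) :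
    1 < q.natAbs := by
  by_contra! hle
  have hunit : IsUnit (q : ZMod n) := (orderOf_pos_iff.1 (by omega)).isUnit
  have hsq : (q : ZMod n) ^ 2 = 1 := by
    rcases (show q = 0 ∨ q = 1 ∨ q = -1 by omega) with rfl | rfl | rfl
    · simp only [Int.cast_zero, isUnit_zero_iff] at hunit ⊢
      rw [hunit, one_pow]
    · simp
    · simp
  have := orderOf_le_of_pow_eq_one two_pos hsq
  omega

theorem injective_pow_of_two_lt_orderOf {K : Type*} [Field K] [CharZero K] {n m : ℕ} {q : ℤ}
    (h : 2 < orderOf (q : ZMod n)) (hm : m ≠ 0) :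
    Function.Injective fun s : ℕ => ((q : K) ^ m) ^ s := fun s t hst =>
  Int.pow_right_injective
    (Int.natAbs_pow q m ▸ Nat.one_lt_pow hm (one_lt_natAbs_of_two_lt_orderOf h))
    (Int.cast_injective (α := K) (by simpa using hst))

theorem two_lt_mul_sub_one_of_odd {p : ℕ} (hp : p.Prime) (hodd : Odd p) : 2 < p * (p - 1) := by
  have h3 : 3 ≤ p :=
    hp.two_le.lt_of_ne' (by rintro rfl; exact Nat.not_odd_iff_even.2 even_two hodd)
  have := Nat.mul_le_mul h3 (Nat.le_sub_one_of_lt h3)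
  omega

section Cpoly

variable {p : ℕ} [Fact p.Prime] {q : ℤ}

theorem cpoly_isHomogeneous (k : ℕ) : (cpoly p q k).IsHomogeneous k := by
  have h := IsHomogeneous.prod (σ := Fin 2) (range k)
    (fun i => C ((((q : ℚ_[p]) ^ (p - 1)) ^ k - ((q : ℚ_[p]) ^ (p - 1)) ^ i)⁻¹) *
      (X 1 - C (((q : ℚ_[p]) ^ (p - 1)) ^ i) * X 0))
    (fun _ => 1) fun i _ => ((isHomogeneous_X ℚ_[p] 1).sub (isHomogeneous_C_mul_X _ 0)).C_mul _
  rwa [sum_const, card_range, smul_eq_mul, mul_one] at h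

theorem eval_cpoly_eq_gaussBinomial
    (hq : Function.Injective fun s : ℕ => ((q : ℚ_[p]) ^ (p - 1)) ^ s) (s k : ℕ) :
    eval ![1, ((q : ℚ_[p]) ^ (p - 1)) ^ s] (cpoly p q k) =
      (gaussBinomial (q ^ (p - 1)) s k : ℤ) := by
  rw [Int.cast_gaussBinomial, Int.cast_pow, gaussBinomial_eq_prod_div hq, cpoly, map_prod,
    div_eq_inv_mul, ← prod_inv_distrib, ← prod_mul_distrib]
  simp

theorem eq_sum_cpoly_of_eval_eq
    (hq : Function.Injective fun s : ℕ => ((q : ℚ_[p]) ^ (p - 1)) ^ s)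
    {f : MvPolynomial (Fin 2) ℚ_[p]} {d : ℕ} (hf : f.IsHomogeneous d) (a : ℕ → ℚ_[p])
    (h : ∀ s ≤ d, eval ![1, ((q : ℚ_[p]) ^ (p - 1)) ^ s] f =
      ∑ k ∈ range (d + 1), a k * (gaussBinomial (q ^ (p - 1)) s k : ℤ)) :
    f = ∑ k ∈ range (d + 1), C (a k) * X 0 ^ (d - k) * cpoly p q k := by
  classical
  have hF : (∑ k ∈ range (d + 1), C (a k) * X 0 ^ (d - k) * cpoly p q k).IsHomogeneous d :=
    IsHomogeneous.sum _ _ _ fun k hk => by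
      simpa [Nat.sub_add_cancel (mem_range_succ_iff.1 hk)] using
        (isHomogeneous_C_mul_X_pow (a k) 0 (d - k)).mul (cpoly_isHomogeneous (q := q) k)
  rw [← sub_eq_zero]
  refine (hf.sub hF).eq_zero_of_eval_one_eq_zero ((range (d + 1)).image _)
    (by rw [card_image_of_injective _ hq, card_range]; omega) ?_
  simp only [mem_image, mem_range, forall_exists_index, and_imp, forall_apply_eq_imp_iff₂]
  intro s hs
  rw [map_sub, h s (by omega), map_sum, sub_eq_zero]
  refine sum_congr rfl fun k _ => ?_
  simp [eval_cpoly_eq_gaussBinomial hq]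

theorem exists_pow_pow_eq_one_add_mul (hq : IsUnit (q : ZMod (p ^ 2))) (s : ℕ) :
    ∃ b : ℤ_[p], ((q : ℚ_[p]) ^ (p - 1)) ^ s = ((1 + p * b : ℤ_[p]) : ℚ_[p]) := by
  have hq' := hq.map (ZMod.castHom (dvd_pow_self p two_ne_zero) (ZMod p))
  rw [map_intCast] at hq'
  obtain ⟨b, hb⟩ : (p : ℤ) ∣ (q ^ (p - 1)) ^ s - 1 := by
    rw [← ZMod.intCast_zmod_eq_zero_iff_dvd]
    push_cast
    rw [ZMod.pow_card_sub_one_eq_one hq'.ne_zero, one_pow, sub_self]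
  refine ⟨b, ?_⟩
  push_cast
  exact_mod_cast sub_eq_iff_eq_add'.1 hb

theorem norm_eval_one_add_mul_le {f : MvPolynomial (Fin 2) ℚ_[p]} {d : ℕ}
    (hf : f.IsHomogeneous d)
    (hint : ∀ a b : ℤ_[p], ∀ n : ℕ,
      ‖(MvPolynomial.aeval (fun i : Fin 2 =>
          if i = 0 then Polynomial.C (((1 + p * a : ℤ_[p]) : ℚ_[p])) * Polynomial.X
          else Polynomial.C (((1 + p * b : ℤ_[p]) : ℚ_[p])) * Polynomial.X) f).coeff n‖ ≤ 1)
    (b : ℤ_[p]) : ‖eval ![1, ((1 + p * b : ℤ_[p]) : ℚ_[p])] f‖ ≤ 1 := by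
  have h := hint 0 b d
  rwa [show (fun i : Fin 2 => _) =
      fun i => Polynomial.C (![1, ((1 + p * b : ℤ_[p]) : ℚ_[p])] i) * Polynomial.X from
      funext fun i => by fin_cases i <;> simp,
    hf.aeval_C_mul_X, Polynomial.coeff_C_mul_X_pow, if_pos rfl] at h

end Cpoly

/-- if `f ∈ ℚ_p[u,v]` is homogeneous and `f(kt, lt) ∈ ℤ_p[t]` for all
`k, l ∈ 1 + pℤ_p`, then `f` is a `ℤ_p[u]`-linear combination of the `c_k`. -/
theorem stmt4 (p : ℕ) [Fact p.Prime] (hodd : Odd p) (q : ℤ)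
    (hq : orderOf ((q : ZMod (p ^ 2))) = p * (p - 1))
    (f : MvPolynomial (Fin 2) ℚ_[p]) (d : ℕ) (hf : f.IsHomogeneous d)
    (hint : ∀ a b : ℤ_[p], ∀ n : ℕ,
      ‖(MvPolynomial.aeval (fun i : Fin 2 =>
          if i = 0 then Polynomial.C (((1 + p * a : ℤ_[p]) : ℚ_[p])) * Polynomial.X
          else Polynomial.C (((1 + p * b : ℤ_[p]) : ℚ_[p])) * Polynomial.X) f).coeff n‖ ≤ 1) :
    ∃ (N : ℕ) (g : ℕ → ℕ → ℤ_[p]),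
      f = ∑ k ∈ Finset.range N,
        (∑ j ∈ Finset.range N, C ((g k j : ℚ_[p])) * (X 0) ^ j) * cpoly p q k := by
  have horder : 2 < orderOf (q : ZMod (p ^ 2)) := hq ▸ two_lt_mul_sub_one_of_odd Fact.out hodd
  have hunit : IsUnit (q : ZMod (p ^ 2)) := (orderOf_pos_iff.1 (by omega)).isUnit
  have hQ := injective_pow_of_two_lt_orderOf (K := ℚ_[p]) horder (m := p - 1)
    (Nat.sub_ne_zero_of_lt (Fact.out : p.Prime).one_lt)
  have hE : ∀ s, ‖eval ![1, ((q : ℚ_[p]) ^ (p - 1)) ^ s] f‖ ≤ 1 := fun s => by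
    obtain ⟨b, hb⟩ := exists_pow_pow_eq_one_add_mul hunit s
    exact hb ▸ norm_eval_one_add_mul_le hf hint b
  obtain ⟨a, ha⟩ := exists_sum_mul_eq_of_unitriangular
    (fun k s => ((gaussBinomial (q ^ (p - 1)) s k : ℤ) : ℤ_[p]))
    (fun h => by simp [gaussBinomial_eq_zero_of_lt _ h]) (fun s => by simp)
    (fun s => ⟨_, hE s⟩) (d + 1)
  have hfa := eq_sum_cpoly_of_eval_eq hQ hf (fun k => (a k : ℚ_[p])) fun s hs => by
    have := congrArg (PadicInt.Coe.ringHom (p := p)) (ha s (by omega))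
    simp only [map_sum, map_mul, map_intCast] at this
    exact this.symm
  refine ⟨d + 1, fun k j => if j = d - k then a k else 0,
    hfa.trans (sum_congr rfl fun k hk => congrArg (· * cpoly p q k) ?_)⟩
  rw [sum_eq_single_of_mem (d - k) (mem_range.2 (by omega)) fun j _ hj => by simp [hj]]
  simp
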